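/- arXiv:2003.12922 — 3 statements merged into one kernel-verified Lean document; each statement's English description precedes it below -/
import Mathlib

section
/- Let G be a finite simple graph with maximum degree Δ(G). Then pn(E_c(G)) ≤ pn(G) + ⌈Δ(G)/2⌉, where E_c(G) is the complete expansion graph of G and pn denotes the pagenumber. -/
open SimpleGraph

/-- The vertex type of the complete expansion graph of `G`: incidence pairs `(v, e)`
with `e` an edge of `G` and `v` an endpoint of `e`. -/
abbrev IncidencePair {V : Type*} (G : SimpleGraph V) : Type _ :=
  {p : V × Sym2 V // p.2 ∈ G.edgeSet ∧ p.1 ∈ p.2}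

/-- The complete expansion graph `E_c(G)` of a simple graph `G`: vertices are the incidence
pairs `(v, e)` of `G`, and two distinct pairs `(v, e)`, `(w, f)` are adjacent iff `v = w`
or `e = f`. -/
def completeExpansion {V : Type*} (G : SimpleGraph V) : SimpleGraph (IncidencePair G) :=
  SimpleGraph.fromRel (fun x y =>
    (x : V × Sym2 V).1 = (y : V × Sym2 V).1 ∨ (x : V × Sym2 V).2 = (y : V × Sym2 V).2)

/-- With vertices placed on the spine at positions `f`, the edges `e = {a,b}` and
`e' = {c,d}` cross iff (for suitable representations) `f a < f c < f b < f d`. -/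
def edgesCross {V : Type*} (f : V → ℕ) (e e' : Sym2 V) : Prop :=
  ∃ a b c d : V, e = s(a, b) ∧ e' = s(c, d) ∧ f a < f c ∧ f c < f b ∧ f b < f d

/-- `G` admits a `k`-page book embedding: the vertices are linearly ordered along the spine
(via an injection into `ℕ`), every edge is either drawn on the spine (`none`, which is only
possible for an edge joining two consecutive vertices of the spine) or assigned to one of
`k` pages, and two edges assigned to the same page never cross. -/
def HasBookEmbedding {V : Type*} (G : SimpleGraph V) (k : ℕ) : Prop :=
  ∃ (f : V → ℕ) (page : G.edgeSet → Option (Fin k)),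
    Function.Injective f ∧
    (∀ e : G.edgeSet, page e = none →
      ∃ a b : V, (e : Sym2 V) = s(a, b) ∧ f a < f b ∧ ∀ c : V, ¬(f a < f c ∧ f c < f b)) ∧
    (∀ e e' : G.edgeSet, (page e).isSome → page e = page e' →
      ¬ edgesCross f (e : Sym2 V) (e' : Sym2 V))

/-- The pagenumber of `G`: the least number of pages of a book embedding of `G`. -/
noncomputable def pageNumber {V : Type*} (G : SimpleGraph V) : ℕ :=
  sInf {k | HasBookEmbedding G k}

/-!
Start from an optimal book embedding of `G` and blow each vertex `v` up into a block of
`deg v` consecutive spine positions, one for each incidence pair `(v, e)`. If each block is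
sorted by the position of the other endpoint of `e`, the expanded edges `(v, e)(w, e)` nest and
cross exactly like the edges `e` of `G`, so they can keep the pages of `G`, and an edge drawn on
the spine joins consecutive positions again. The clique on a block fits on `⌈deg v / 2⌉ ≤ ⌈Δ/2⌉`
new pages, and all blocks can share these pages because they occupy disjoint intervals of the
spine.
-/

theorem not_edgesCross_self {W : Type*} (f : W → ℕ) (e : Sym2 W) : ¬ edgesCross f e e := by
  rintro ⟨a, b, c, d, rfl, h, hac, hcb, hbd⟩
  rcases Sym2.eq_iff.mp h with ⟨rfl, rfl⟩ | ⟨rfl, rfl⟩ <;> omega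

theorem hasBookEmbedding_card_edgeSet {W : Type*} [Finite W] (H : SimpleGraph W) :
    HasBookEmbedding H (Nat.card H.edgeSet) := by
  have := Fintype.ofFinite W
  refine ⟨fun v => Finite.equivFin W v, fun e => some (Finite.equivFin H.edgeSet e),
    Fin.val_injective.comp (Finite.equivFin W).injective, by simp, ?_⟩
  rintro e e' - h
  obtain rfl : e = e' := (Finite.equivFin H.edgeSet).injective (Option.some_injective _ h)
  exact not_edgesCross_self _ _

theorem hasBookEmbedding_pageNumber {W : Type*} [Finite W] (H : SimpleGraph W) :
    HasBookEmbedding H (pageNumber H) :=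
  Nat.sInf_mem (s := {k | HasBookEmbedding H k}) ⟨_, hasBookEmbedding_card_edgeSet H⟩

theorem HasBookEmbedding.of_symm {W α : Type*} [Fintype α] {H : SimpleGraph W}
    (f : W → ℕ) (hf : Function.Injective f) (P : W → W → Option α)
    (hP : ∀ a b, P a b = P b a)
    (hspine : ∀ a b, H.Adj a b → P a b = none → f a < f b → ∀ c, ¬(f a < f c ∧ f c < f b))
    (hcross : ∀ a b c d, H.Adj a b → H.Adj c d → (P a b).isSome → P a b = P c d →
      f a < f c → f c < f b → f b < f d → False) :
    HasBookEmbedding H (Fintype.card α) := by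
  let page (e : H.edgeSet) : Option (Fin (Fintype.card α)) :=
    (Sym2.lift ⟨P, hP⟩ e.1).map (Fintype.equivFin α)
  have page_mk : ∀ a b (h : s(a, b) ∈ H.edgeSet),
      page ⟨s(a, b), h⟩ = (P a b).map (Fintype.equivFin α) := fun a b _ => by
    simp only [page, Sym2.lift_mk]
  refine ⟨f, page, hf, ?_, ?_⟩
  · rintro ⟨e, he⟩ hnone
    induction e using Sym2.ind with | _ a b => ?_
    rw [page_mk, Option.map_eq_none_iff] at hnone
    have hab : f a ≠ f b := hf.ne (H.ne_of_adj he)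
    rcases hab.lt_or_gt with hab | hba
    · exact ⟨a, b, rfl, hab, hspine a b he hnone hab⟩
    · exact ⟨b, a, Sym2.eq_swap, hba,
        hspine b a he.symm (by rwa [hP]) hba⟩
  · rintro ⟨_, he⟩ ⟨_, he'⟩ hsome heq ⟨a, b, c, d, rfl, rfl, hac, hcb, hbd⟩
    simp only [page_mk, Option.isSome_map] at hsome heq
    exact hcross a b c d he he' hsome
      (Option.map_injective (Fintype.equivFin α).injective heq) hac hcb hbd

theorem completeExpansion_adj {V : Type*} {G : SimpleGraph V} {a b : IncidencePair G} :
    (completeExpansion G).Adj a b ↔ a ≠ b ∧ (a.1.1 = b.1.1 ∨ a.1.2 = b.1.2) := by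
  rw [completeExpansion, fromRel_adj]
  grind

namespace IncidencePair

variable {V : Type*} {G : SimpleGraph V}

theorem ext' {a b : IncidencePair G} (h₁ : a.1.1 = b.1.1) (h₂ : a.1.2 = b.1.2) : a = b :=
  Subtype.ext (Prod.ext h₁ h₂)

noncomputable def other (a : IncidencePair G) : V := Sym2.Mem.other a.2.2

theorem mk_other (a : IncidencePair G) : s(a.1.1, a.other) = a.1.2 := Sym2.other_spec _

theorem adj_other (a : IncidencePair G) : G.Adj a.1.1 a.other := by
  rw [← mem_edgeSet, mk_other]
  exact a.2.1

theorem other_ne (a : IncidencePair G) : a.other ≠ a.1.1 := (G.ne_of_adj a.adj_other).symm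

theorem other_eq {a : IncidencePair G} {w : V} (h : a.1.2 = s(a.1.1, w)) : a.other = w :=
  Sym2.congr_right.mp (a.mk_other.trans h)

theorem eq_of_other_eq {a b : IncidencePair G} (h₁ : a.1.1 = b.1.1) (h₂ : a.other = b.other) :
    a = b :=
  ext' h₁ (by rw [← mk_other, ← mk_other, h₁, h₂])

theorem other_eq_of_edge_eq {a b : IncidencePair G} (h : a.1.2 = b.1.2) (hab : a ≠ b) :
    a.other = b.1.1 := by
  have hv : a.1.1 ≠ b.1.1 := fun hv => hab (ext' hv h)
  apply other_eq
  exact Sym2.eq_of_ne_mem hv a.2.2 (h ▸ b.2.2) (Sym2.mem_mk_left _ _) (Sym2.mem_mk_right _ _)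

theorem ncard_vertex_eq_degree [Fintype V] [DecidableRel G.Adj] (v : V) :
    {b : IncidencePair G | b.1.1 = v}.ncard = G.degree v := by
  have hinj : Set.InjOn other {b : IncidencePair G | b.1.1 = v} :=
    fun a ha b hb h => eq_of_other_eq (ha.trans hb.symm) h
  have himage : other '' {b : IncidencePair G | b.1.1 = v} = G.neighborSet v := by
    ext w
    refine ⟨?_, fun hw => ⟨⟨(v, s(v, w)), hw, Sym2.mem_mk_left v w⟩, rfl, other_eq rfl⟩⟩
    rintro ⟨b, rfl, rfl⟩
    exact b.adj_other
  rw [← hinj.ncard_image, himage, ← card_neighborSet_eq_degree, Set.ncard_eq_toFinset_card',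
    Set.toFinset_card]

end IncidencePair

/-- Putting the chord `ij` of a convex `d`-gon on page `((i + j) mod d) / 2` is the classical
`⌈d/2⌉`-page book embedding of `K_d`: the chords on one page are pairwise parallel. -/
theorem Nat.mod_div_two_ne_of_interleaved {d i j k l : ℕ} (hik : i < k) (hkj : k < j)
    (hjl : j < l) (hld : l < d) : (i + j) % d / 2 ≠ (k + l) % d / 2 := by
  intro h
  rcases Nat.lt_or_ge (i + j) d with hij | hij <;> rcases Nat.lt_or_ge (k + l) d with hkl | hkl
  · rw [Nat.mod_eq_of_lt hij, Nat.mod_eq_of_lt hkl] at h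
    omega
  · rw [Nat.mod_eq_of_lt hij, Nat.mod_eq_sub_mod hkl, Nat.mod_eq_of_lt (by omega)] at h
    omega
  · omega
  · rw [Nat.mod_eq_sub_mod hij, Nat.mod_eq_of_lt (by omega), Nat.mod_eq_sub_mod hkl,
      Nat.mod_eq_of_lt (by omega)] at h
    omega

section Placement

variable {V : Type*} [Fintype V] {G : SimpleGraph V} (f : V → ℕ)

def spineBound : ℕ := Finset.univ.sup f + 1

/-- The pairs `(v, vw)` of the block of `v` are sorted by `w`: first the neighbours left of `v`,
from the nearest to the farthest, then those right of `v`, from the farthest to the nearest.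
This nests the expanded edges leaving the block. -/
noncomputable def expansionKey (a : IncidencePair G) : ℕ :=
  if f a.other < f a.1.1 then spineBound f - f a.other else 2 * spineBound f - f a.other

noncomputable def expansionPos (a : IncidencePair G) : ℕ :=
  f a.1.1 * (2 * spineBound f + 1) + expansionKey f a

noncomputable def expansionRank (a : IncidencePair G) : ℕ :=
  {b : IncidencePair G | b.1.1 = a.1.1 ∧ expansionKey f b < expansionKey f a}.ncard

variable {f}

theorem lt_spineBound (v : V) : f v < spineBound f :=
  Nat.lt_succ_of_le (Finset.le_sup (Finset.mem_univ v))

theorem expansionKey_of_lt {a : IncidencePair G} (h : f a.other < f a.1.1) :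
    expansionKey f a = spineBound f - f a.other :=
  if_pos h

theorem expansionKey_of_gt {a : IncidencePair G} (h : f a.1.1 < f a.other) :
    expansionKey f a = 2 * spineBound f - f a.other :=
  if_neg h.not_gt

theorem expansionKey_pos (a : IncidencePair G) : 0 < expansionKey f a := by
  have := lt_spineBound (f := f) a.other
  unfold expansionKey
  split <;> omega

theorem expansionKey_le (a : IncidencePair G) : expansionKey f a ≤ 2 * spineBound f := by
  unfold expansionKey
  split <;> omega

theorem expansionPos_lt_iff {a b : IncidencePair G} :
    expansionPos f a < expansionPos f b ↔
      f a.1.1 < f b.1.1 ∨ f a.1.1 = f b.1.1 ∧ expansionKey f a < expansionKey f b := by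
  have ha := expansionKey_le (f := f) a
  have hb := expansionKey_le (f := f) b
  have ha' := expansionKey_pos (f := f) a
  have hb' := expansionKey_pos (f := f) b
  have mul_step {x y : ℕ} (h : x < y) :
      x * (2 * spineBound f + 1) + (2 * spineBound f + 1) ≤ y * (2 * spineBound f + 1) := by
    nlinarith
  unfold expansionPos
  rcases lt_trichotomy (f a.1.1) (f b.1.1) with h | h | h
  · have := mul_step h
    omega
  · rw [h]
    omega
  · have := mul_step h
    omega

theorem expansionKey_eq_iff {a b : IncidencePair G} (h : a.1.1 = b.1.1) :
    expansionKey f a = expansionKey f b ↔ f a.other = f b.other := by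
  have := lt_spineBound (f := f) a.other
  have := lt_spineBound (f := f) b.other
  unfold expansionKey
  rw [h]
  split_ifs <;> omega

theorem expansionPos_injective (hf : Function.Injective f) :
    Function.Injective (expansionPos (G := G) f) := by
  intro a b h
  have hab := (expansionPos_lt_iff (a := a) (b := b)).not.mp h.not_lt
  have hba := (expansionPos_lt_iff (a := b) (b := a)).not.mp h.not_gt
  have hv : a.1.1 = b.1.1 := hf (by omega)
  exact IncidencePair.eq_of_other_eq hv (hf ((expansionKey_eq_iff hv).mp (by omega)))

theorem expansionRank_lt_degree [DecidableRel G.Adj] (a : IncidencePair G) :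
    expansionRank f a < G.degree a.1.1 := by
  rw [← IncidencePair.ncard_vertex_eq_degree]
  exact Set.ncard_lt_ncard ⟨fun b hb => hb.1, fun h => (h rfl).2.false⟩ (Set.toFinite _)

theorem expansionRank_lt_expansionRank {a b : IncidencePair G} (hv : a.1.1 = b.1.1)
    (hk : expansionKey f a < expansionKey f b) : expansionRank f a < expansionRank f b :=
  Set.ncard_lt_ncard ⟨fun _ hc => ⟨hc.1.trans hv, hc.2.trans hk⟩, fun h => (h ⟨hv, hk⟩).2.false⟩
    (Set.toFinite _)

end Placement

section Crossings

variable {V : Type*} [Fintype V] {G : SimpleGraph V} {f : V → ℕ}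

theorem expansionKey_of_edge_eq (hf : Function.Injective f) {a b : IncidencePair G}
    (hab : a.1.2 = b.1.2) (hne : a ≠ b) (hpos : expansionPos f a < expansionPos f b) :
    f a.1.1 < f b.1.1 ∧ expansionKey f a = 2 * spineBound f - f b.1.1 ∧
      expansionKey f b = spineBound f - f a.1.1 := by
  have hoa := IncidencePair.other_eq_of_edge_eq hab hne
  have hob := IncidencePair.other_eq_of_edge_eq hab.symm hne.symm
  have hv : f a.1.1 ≠ f b.1.1 := hf.ne (hoa ▸ a.other_ne).symm
  have hlt : f a.1.1 < f b.1.1 := (expansionPos_lt_iff.mp hpos).resolve_right (hv ·.1)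
  exact ⟨hlt, hoa ▸ expansionKey_of_gt (hoa ▸ hlt), hob ▸ expansionKey_of_lt (hob ▸ hlt)⟩

theorem expansionPos_consecutive (hf : Function.Injective f) {a b : IncidencePair G}
    (hab : a.1.2 = b.1.2) (hne : a ≠ b) (hpos : expansionPos f a < expansionPos f b) {u w : V}
    (huw : a.1.2 = s(u, w)) (hlt : f u < f w) (hmid : ∀ c, ¬(f u < f c ∧ f c < f w))
    (z : IncidencePair G) :
    ¬(expansionPos f a < expansionPos f z ∧ expansionPos f z < expansionPos f b) := by
  rintro ⟨haz, hzb⟩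
  obtain ⟨hab', hka, hkb⟩ := expansionKey_of_edge_eq hf hab hne hpos
  obtain ⟨rfl, rfl⟩ : a.1.1 = u ∧ b.1.1 = w := by
    rw [← a.mk_other, IncidencePair.other_eq_of_edge_eq hab hne] at huw
    rcases Sym2.eq_iff.mp huw with h | ⟨rfl, rfl⟩
    · exact h
    · omega
  rw [expansionPos_lt_iff] at haz hzb
  have := hmid z.1.1
  have := hmid z.other
  have := lt_spineBound (f := f) z.other
  have := lt_spineBound (f := f) b.1.1
  rcases (hf.ne z.other_ne).lt_or_gt with hz | hz
  · rw [expansionKey_of_lt hz] at haz hzb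
    omega
  · rw [expansionKey_of_gt hz] at haz hzb
    omega

theorem expansionPos_not_interleaved_of_edge_eq (hf : Function.Injective f)
    {a b c d : IncidencePair G} (hab : a.1.2 = b.1.2) (hab' : a ≠ b) (hcd : c.1.2 = d.1.2)
    (hcd' : c ≠ d) (hnc : ¬ edgesCross f a.1.2 c.1.2)
    (hac : expansionPos f a < expansionPos f c) (hcb : expansionPos f c < expansionPos f b)
    (hbd : expansionPos f b < expansionPos f d) : False := by
  obtain ⟨hlt, hka, hkb⟩ := expansionKey_of_edge_eq hf hab hab' (hac.trans hcb)
  obtain ⟨hlt', hkc, hkd⟩ := expansionKey_of_edge_eq hf hcd hcd' (hcb.trans hbd)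
  have hnc' : ¬(f a.1.1 < f c.1.1 ∧ f c.1.1 < f b.1.1 ∧ f b.1.1 < f d.1.1) := fun h =>
    hnc ⟨a.1.1, b.1.1, c.1.1, d.1.1,
      by rw [← a.mk_other, IncidencePair.other_eq_of_edge_eq hab hab'],
      by rw [← c.mk_other, IncidencePair.other_eq_of_edge_eq hcd hcd'], h⟩
  rw [expansionPos_lt_iff] at hac hcb hbd
  have := lt_spineBound (f := f) b.1.1
  have := lt_spineBound (f := f) d.1.1
  omega

theorem expansionPos_not_interleaved_of_vertex_eq [DecidableRel G.Adj]
    (hf : Function.Injective f) {a b c d : IncidencePair G} (hab : a.1.1 = b.1.1)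
    (hcd : c.1.1 = d.1.1)
    (hpage : (expansionRank f a + expansionRank f b) % G.degree a.1.1 / 2 =
      (expansionRank f c + expansionRank f d) % G.degree c.1.1 / 2)
    (hac : expansionPos f a < expansionPos f c) (hcb : expansionPos f c < expansionPos f b)
    (hbd : expansionPos f b < expansionPos f d) : False := by
  rw [expansionPos_lt_iff] at hac hcb hbd
  have hca : c.1.1 = a.1.1 := hf (by rw [← hab] at hcb; omega)
  have hbd' : b.1.1 = d.1.1 := hab.symm.trans (hca.symm.trans hcd)
  rw [hca] at hpage
  have := congrArg f hab
  have := congrArg f hca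
  have := congrArg f hbd'
  refine Nat.mod_div_two_ne_of_interleaved
    (expansionRank_lt_expansionRank hca.symm (by omega))
    (expansionRank_lt_expansionRank (hca.trans hab) (by omega))
    (expansionRank_lt_expansionRank hbd' (by omega)) ?_ hpage
  rw [hab, hbd']
  exact expansionRank_lt_degree d

end Crossings

section Pages

variable {V : Type*} [Fintype V] {G : SimpleGraph V} [DecidableRel G.Adj] {k : ℕ}
  (f : V → ℕ) (page : G.edgeSet → Option (Fin k))

noncomputable def cliquePage (a b : IncidencePair G) : Fin ((G.maxDegree + 1) / 2) :=
  ⟨(expansionRank f a + expansionRank f b) % G.degree a.1.1 / 2, by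
    have hpos : 0 < G.degree a.1.1 := G.degree_pos_iff_exists_adj _ |>.mpr ⟨_, a.adj_other⟩
    have := Nat.mod_lt (expansionRank f a + expansionRank f b) hpos
    have := G.degree_le_maxDegree a.1.1
    omega⟩

open Classical in
noncomputable def expansionPage (a b : IncidencePair G) :
    Option (Fin k ⊕ Fin ((G.maxDegree + 1) / 2)) :=
  if a.1.2 = b.1.2 then (page ⟨a.1.2, a.2.1⟩).map Sum.inl
  else if a.1.1 = b.1.1 then some (Sum.inr (cliquePage f a b)) else none

theorem cliquePage_comm {a b : IncidencePair G} (h : a.1.1 = b.1.1) :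
    cliquePage f a b = cliquePage f b a :=
  Fin.ext (by simp only [cliquePage, add_comm, congrArg (fun v => G.degree v) h])

theorem expansionPage_comm (a b : IncidencePair G) :
    expansionPage f page a b = expansionPage f page b a := by
  unfold expansionPage
  by_cases he : a.1.2 = b.1.2
  · simp only [he, if_true]
  · by_cases hv : a.1.1 = b.1.1
    · simp only [he, Ne.symm he, hv, if_false, if_true, cliquePage_comm f hv]
    · simp only [he, Ne.symm he, hv, Ne.symm hv, if_false]

variable {f page}

theorem expansionPage_eq_some_inl {a b : IncidencePair G} {i : Fin k} :
    expansionPage f page a b = some (Sum.inl i) ↔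
      a.1.2 = b.1.2 ∧ page ⟨a.1.2, a.2.1⟩ = some i := by
  unfold expansionPage
  split_ifs <;> simp [*]

theorem expansionPage_eq_some_inr {a b : IncidencePair G} {p : Fin ((G.maxDegree + 1) / 2)} :
    expansionPage f page a b = some (Sum.inr p) ↔
      a.1.2 ≠ b.1.2 ∧ a.1.1 = b.1.1 ∧ cliquePage f a b = p := by
  unfold expansionPage
  split_ifs <;> simp [*]

theorem expansionPage_eq_none {a b : IncidencePair G} (hab : (completeExpansion G).Adj a b)
    (h : expansionPage f page a b = none) : a.1.2 = b.1.2 ∧ page ⟨a.1.2, a.2.1⟩ = none := by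
  have := (completeExpansion_adj.mp hab).2
  unfold expansionPage at h
  split_ifs at h <;> simp_all

end Pages

theorem hasBookEmbedding_completeExpansion {V : Type*} [Fintype V] {G : SimpleGraph V}
    [DecidableRel G.Adj] {k : ℕ} (hG : HasBookEmbedding G k) :
    HasBookEmbedding (completeExpansion G) (k + (G.maxDegree + 1) / 2) := by
  obtain ⟨f, page, hf, hspine, hcross⟩ := hG
  rw [show k + (G.maxDegree + 1) / 2 = Fintype.card (Fin k ⊕ Fin ((G.maxDegree + 1) / 2)) by
    simp]
  refine .of_symm (expansionPos f) (expansionPos_injective hf) (expansionPage f page)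
    (expansionPage_comm f page) ?_ ?_
  · intro a b hadj hnone hpos
    have hne := (completeExpansion_adj.mp hadj).1
    obtain ⟨he, hpe⟩ := expansionPage_eq_none hadj hnone
    obtain ⟨u, w, huw, hlt, hmid⟩ := hspine _ hpe
    exact expansionPos_consecutive hf he hne hpos huw hlt hmid
  · intro a b c d hadj hadj' hsome heq hac hcb hbd
    obtain ⟨x, hx⟩ := Option.isSome_iff_exists.mp hsome
    rw [hx] at heq
    rcases x with i | p
    · obtain ⟨hab, hpa⟩ := expansionPage_eq_some_inl.mp hx
      obtain ⟨hcd, hpc⟩ := expansionPage_eq_some_inl.mp heq.symm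
      exact expansionPos_not_interleaved_of_edge_eq hf hab (completeExpansion_adj.mp hadj).1
        hcd (completeExpansion_adj.mp hadj').1
        (hcross ⟨a.1.2, a.2.1⟩ ⟨c.1.2, c.2.1⟩ (by simp [hpa]) (hpa.trans hpc.symm)) hac hcb hbd
    · obtain ⟨-, hab, hpa⟩ := expansionPage_eq_some_inr.mp hx
      obtain ⟨-, hcd, hpc⟩ := expansionPage_eq_some_inr.mp heq.symm
      exact expansionPos_not_interleaved_of_vertex_eq hf hab hcd
        (congrArg Fin.val (hpa.trans hpc.symm)) hac hcb hbd

theorem stmt7 {V : Type*} [Fintype V] (G : SimpleGraph V) [DecidableRel G.Adj] :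
    pageNumber (completeExpansion G) ≤ pageNumber G + (G.maxDegree + 1) / 2 :=
  Nat.sInf_le (hasBookEmbedding_completeExpansion (hasBookEmbedding_pageNumber G))
end

section
/- Let m ≥ 4 be a natural number and let S_{m+1} = K_{1,m} be the star graph with m+1 vertices (one center of degree m and m leaves). Then pn(E_c(S_{m+1})) = ⌈m/2⌉, where E_c denotes the complete expansion graph and pn denotes the pagenumber. -/
open SimpleGraph

/-!
The complete expansion of `K_{1,m}` is `K_m` with a pendant edge at every vertex: the incidences
at the centre form the clique. Each pendant edge can be drawn on the spine next to its clique
vertex, and the Bernhart–Kainen layout of `K_m`, with `{i, j}` on page `⌊((i + j) mod m) / 2⌋`,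
uses `⌈m / 2⌉` pages. Conversely, in a `k`-page layout of `K_m` the spine order makes the vertices
an `m`-gon: at most `m` edges are its sides and every page holds at most `m - 3` non-crossing
diagonals, so `m (m - 1) / 2 ≤ m + k (m - 3)`, which forces `2 k ≥ m` once `m ≥ 4`.
-/

open Finset

/-- A pair `(i, j)` with `i < j` stands for a chord of the polygon with vertices `0, 1, 2, …` in
cyclic order. -/
def ChordsCross (x y : ℕ × ℕ) : Prop := x.1 < y.1 ∧ y.1 < x.2 ∧ x.2 < y.2

theorem add_mod_div_two_ne_of_chordsCross {n a b c d : ℕ} (h : ChordsCross (a, b) (c, d))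
    (hd : d < n) : (a + b) % n / 2 ≠ (c + d) % n / 2 := by
  obtain ⟨hac, hcb, hbd⟩ := h
  have hmod : ∀ x < 2 * n, x < n ∧ x % n = x ∨ n ≤ x ∧ x % n = x - n := fun x hx => by
    rcases lt_or_ge x n with h | h
    · exact .inl ⟨h, Nat.mod_eq_of_lt h⟩
    · exact .inr ⟨h, by rw [Nat.mod_eq_sub_mod h, Nat.mod_eq_of_lt (by omega)]⟩
  -- `c + d - (a + b)` lies in `[2, n - 2]`, so the two residues differ by at least `2`.
  rcases hmod (a + b) (by omega) with h₁ | h₁ <;> rcases hmod (c + d) (by omega) with h₂ | h₂ <;>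
    omega

section Noncrossing

variable {D : Finset (ℕ × ℕ)}

theorem exists_mem_Ioo_not_inside_subchord (hlen : ∀ x ∈ D, x.1 + 2 ≤ x.2)
    (hD : ∀ x ∈ D, ∀ y ∈ D, ¬ ChordsCross x y) {x : ℕ × ℕ} (hx : x ∈ D) :
    ∃ p, x.1 < p ∧ p < x.2 ∧
      ∀ y ∈ D, y ≠ x → x.1 ≤ y.1 → y.2 ≤ x.2 → ¬ (y.1 < p ∧ p < y.2) := by
  by_cases h : ∃ y ∈ D, y.1 = x.1 ∧ y.2 < x.2
  · -- `p` is the right end of the longest chord of `D` strictly inside `x` starting at `x.1`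
    obtain ⟨y, hy, hy1, hy2⟩ := h
    obtain ⟨y₀, hy₀, hmax⟩ := (D.filter fun y => y.1 = x.1 ∧ y.2 < x.2).exists_max_image
      Prod.snd ⟨y, by simp [hy, hy1, hy2]⟩
    obtain ⟨hy₀D, hy₀1, hy₀2⟩ := by simpa using hy₀
    refine ⟨y₀.2, by have := hlen _ hy₀D; omega, hy₀2, fun y hy hyx h₁ h₂ h₃ => ?_⟩
    rcases h₁.eq_or_lt with h₁ | h₁
    · have hy2 : y.2 < x.2 := lt_of_le_of_ne h₂ fun h₂ => hyx (Prod.ext h₁.symm h₂)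
      have := hmax y (by simp [hy, h₁, hy2])
      omega
    · exact hD _ hy₀D _ hy ⟨by omega, h₃.1, h₃.2⟩
  · refine ⟨x.1 + 1, by omega, by have := hlen x hx; omega, fun y hy hyx h₁ h₂ h₃ => h ?_⟩
    exact ⟨y, hy, by omega, lt_of_le_of_ne h₂ fun h₂ => hyx (Prod.ext (by omega) h₂)⟩

theorem card_le_of_noncrossing {a b : ℕ} (hbd : ∀ x ∈ D, a ≤ x.1 ∧ x.1 + 2 ≤ x.2 ∧ x.2 ≤ b)
    (hD : ∀ x ∈ D, ∀ y ∈ D, ¬ ChordsCross x y) : #D ≤ b - a - 1 := by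
  have hex := fun x (hx : x ∈ D) =>
    exists_mem_Ioo_not_inside_subchord (fun y hy => (hbd y hy).2.1) hD hx
  choose! p hp using hex
  calc #D ≤ #(Ioo a b) := by
        refine card_le_card_of_injOn p (fun x hx => ?_) fun x hx y hy hxy => ?_
        · have := hbd x hx; have := hp x hx; simp only [coe_Ioo, Set.mem_Ioo]; omega
        · by_contra hne
          have := hp x hx; have := hp y hy
          have := (hp x hx).2.2 y hy (Ne.symm hne)
          have := (hp y hy).2.2 x hx hne
          have := hD x hx y hy; have := hD y hy x hx
          simp only [ChordsCross] at *
          omega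
    _ = b - a - 1 := Nat.card_Ioo a b

end Noncrossing

theorem card_noncrossing_diagonals_le {n : ℕ} (hn : 3 ≤ n) {D : Finset (ℕ × ℕ)}
    (hbd : ∀ x ∈ D, x.1 + 2 ≤ x.2 ∧ x.2 < n ∧ x ≠ (0, n - 1))
    (hD : ∀ x ∈ D, ∀ y ∈ D, ¬ ChordsCross x y) : #D ≤ n - 3 := by
  have hside : (0, n - 1) ∉ D := fun h => (hbd _ h).2.2 rfl
  have hside_cross : ∀ x ∈ D, ¬ ChordsCross (0, n - 1) x ∧ ¬ ChordsCross x (0, n - 1) :=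
    fun x hx => by have := hbd x hx; simp only [ChordsCross]; omega
  have := card_le_of_noncrossing (D := insert (0, n - 1) D) (a := 0) (b := n - 1)
    (by simp only [mem_insert, forall_eq_or_imp]; exact ⟨by omega, fun x hx => by
      have := hbd x hx; omega⟩)
    (by simp only [mem_insert, forall_eq_or_imp]
        exact ⟨⟨by simp [ChordsCross], fun y hy => (hside_cross y hy).1⟩,
          fun x hx => ⟨(hside_cross x hx).2, hD x hx⟩⟩)
  rw [card_insert_of_notMem hside] at this
  omega

section BookEmbedding

variable {V W : Type*} {G : SimpleGraph V} {H : SimpleGraph W} {k : ℕ}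

structure IsBookEmbedding (G : SimpleGraph V) (f : V → ℕ) (page : G.edgeSet → Option (Fin k)) :
    Prop where
  injective : Function.Injective f
  spine_adjacent (e : G.edgeSet) : page e = none →
    ∃ a b : V, (e : Sym2 V) = s(a, b) ∧ f a < f b ∧ ∀ c : V, ¬(f a < f c ∧ f c < f b)
  not_edgesCross (e e' : G.edgeSet) : (page e).isSome → page e = page e' →
    ¬ edgesCross f (e : Sym2 V) (e' : Sym2 V)

theorem hasBookEmbedding_iff :
    HasBookEmbedding G k ↔ ∃ f page, IsBookEmbedding (k := k) G f page :=
  ⟨fun ⟨f, page, h₁, h₂, h₃⟩ => ⟨f, page, h₁, h₂, h₃⟩,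
    fun ⟨f, page, h₁, h₂, h₃⟩ => ⟨f, page, h₁, h₂, h₃⟩⟩

theorem IsBookEmbedding.comp_copy {f : W → ℕ} {page : H.edgeSet → Option (Fin k)}
    (h : IsBookEmbedding H f page) (φ : Copy G H) :
    IsBookEmbedding G (f ∘ φ) (page ∘ φ.mapEdgeSet) where
  injective := h.injective.comp φ.injective
  spine_adjacent := by
    rintro ⟨e, he⟩ hnone
    obtain ⟨a, b, hab, hlt, hbetween⟩ := h.spine_adjacent _ hnone
    induction e using Sym2.ind with | _ x y =>
    change s(φ x, φ y) = s(a, b) at hab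
    rcases Sym2.eq_iff.1 hab with ⟨rfl, rfl⟩ | ⟨rfl, rfl⟩
    · exact ⟨x, y, rfl, hlt, fun c => hbetween (φ c)⟩
    · exact ⟨y, x, Sym2.eq_swap, hlt, fun c => hbetween (φ c)⟩
  not_edgesCross e e' hsome heq := by
    rintro ⟨a, b, c, d, hab, hcd, hlt⟩
    refine h.not_edgesCross _ _ hsome heq ⟨φ a, φ b, φ c, φ d, ?_, ?_, hlt⟩
    · change Sym2.map φ e = _; rw [hab]; rfl
    · change Sym2.map φ e' = _; rw [hcd]; rfl

theorem HasBookEmbedding.of_copy (h : HasBookEmbedding H k) (φ : Copy G H) :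
    HasBookEmbedding G k := by
  obtain ⟨f, page, h⟩ := hasBookEmbedding_iff.1 h
  exact hasBookEmbedding_iff.2 ⟨_, _, h.comp_copy φ⟩

theorem IsBookEmbedding.of_lt_iff_lt {f f' : V → ℕ} {page : G.edgeSet → Option (Fin k)}
    (h : IsBookEmbedding G f page) (hf : ∀ u v, f' u < f' v ↔ f u < f v) :
    IsBookEmbedding G f' page where
  injective u v huv := h.injective (by have := hf u v; have := hf v u; omega)
  spine_adjacent e hnone := by
    obtain ⟨a, b, hab, hlt, hbetween⟩ := h.spine_adjacent e hnone
    exact ⟨a, b, hab, (hf a b).2 hlt, fun c => by rw [hf, hf]; exact hbetween c⟩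
  not_edgesCross e e' hsome heq := by
    rintro ⟨a, b, c, d, hab, hcd, h₁, h₂, h₃⟩
    exact h.not_edgesCross e e' hsome heq
      ⟨a, b, c, d, hab, hcd, (hf _ _).1 h₁, (hf _ _).1 h₂, (hf _ _).1 h₃⟩

theorem IsBookEmbedding.exists_equiv_fin [Fintype V] {f : V → ℕ}
    {page : G.edgeSet → Option (Fin k)} (h : IsBookEmbedding G f page) :
    ∃ e : V ≃ Fin (Fintype.card V), IsBookEmbedding G (fun v => (e v : ℕ)) page := by
  let : LinearOrder V := LinearOrder.lift' f h.injective
  let e := (Fintype.orderIsoFinOfCardEq V rfl).symm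
  exact ⟨e.toEquiv, h.of_lt_iff_lt fun u v => Fin.lt_def.symm.trans e.lt_iff_lt⟩

end BookEmbedding

section Counting

variable {V : Type*} {G : SimpleGraph V} {k n : ℕ}

def spineChord (f : V → ℕ) (z : Sym2 V) : ℕ × ℕ := ((z.map f).inf, (z.map f).sup)

theorem spineChord_injective {f : V → ℕ} (hf : Function.Injective f) :
    Function.Injective (spineChord f) := fun _ _ h =>
  Sym2.map.injective hf (Sym2.inf_eq_inf_and_sup_eq_sup.1 (Prod.ext_iff.1 h))

theorem exists_eq_mk_spineChord_eq (f : V → ℕ) (z : Sym2 V) :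
    ∃ a b, z = s(a, b) ∧ f a ≤ f b ∧ spineChord f z = (f a, f b) := by
  induction z using Sym2.ind with | _ a b =>
  rcases le_total (f a) (f b) with h | h
  · exact ⟨a, b, rfl, h, by simp [spineChord, h]⟩
  · exact ⟨b, a, Sym2.eq_swap, h, by simp [spineChord, h]⟩

def polygonSides (n : ℕ) : Finset (ℕ × ℕ) :=
  insert (0, n - 1) ((range (n - 1)).image fun i => (i, i + 1))

theorem card_polygonSides_le (hn : 1 ≤ n) : #(polygonSides n) ≤ n :=
  calc #(polygonSides n) ≤ #(range (n - 1)) + 1 := (card_insert_le _ _).trans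
        (Nat.add_le_add_right card_image_le _)
    _ = n := by rw [card_range]; omega

theorem isDiagonal_of_notMem_polygonSides {x : ℕ × ℕ} (hx : x.1 < x.2) (hxn : x.2 < n)
    (hside : x ∉ polygonSides n) : x.1 + 2 ≤ x.2 ∧ x.2 < n ∧ x ≠ (0, n - 1) := by
  simp only [polygonSides, mem_insert, mem_image, mem_range, not_or, not_exists, not_and] at hside
  refine ⟨?_, hxn, hside.1⟩
  by_contra h
  exact hside.2 x.1 (by omega) (Prod.ext rfl (by omega))

variable {f : V → ℕ} {page : G.edgeSet → Option (Fin k)}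

theorem IsBookEmbedding.not_chordsCross (h : IsBookEmbedding G f page) {z z' : G.edgeSet}
    {p : Fin k} (hz : page z = some p) (hz' : page z' = some p) :
    ¬ ChordsCross (spineChord f z) (spineChord f z') := by
  obtain ⟨a, b, hab, -, hchord⟩ := exists_eq_mk_spineChord_eq f z
  obtain ⟨c, d, hcd, -, hchord'⟩ := exists_eq_mk_spineChord_eq f z'
  rw [hchord, hchord']
  exact fun ⟨h₁, h₂, h₃⟩ => h.not_edgesCross z z' (by simp [hz]) (hz.trans hz'.symm)
    ⟨a, b, c, d, hab, hcd, h₁, h₂, h₃⟩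

variable (e : V ≃ Fin n)

theorem spineChord_lt_of_mem_edgeSet {z : Sym2 V} (hz : z ∈ G.edgeSet) :
    (spineChord (fun v => (e v : ℕ)) z).1 < (spineChord (fun v => (e v : ℕ)) z).2 ∧
      (spineChord (fun v => (e v : ℕ)) z).2 < n := by
  obtain ⟨a, b, rfl, hle, hab⟩ := exists_eq_mk_spineChord_eq (fun v => (e v : ℕ)) z
  rw [hab]
  exact ⟨hle.lt_of_ne (Fin.val_injective.ne (e.injective.ne (G.ne_of_adj hz))), (e b).isLt⟩

variable {e}

theorem IsBookEmbedding.spineChord_mem_polygonSides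
    (h : IsBookEmbedding G (fun v => (e v : ℕ)) page) {z : G.edgeSet} (hz : page z = none) :
    spineChord (fun v => (e v : ℕ)) z ∈ polygonSides n := by
  obtain ⟨a, b, hab, hlt, hbetween⟩ := h.spine_adjacent z hz
  -- all positions are occupied, so the spine edge joins consecutive positions
  have hconsec : (e b : ℕ) = e a + 1 := by
    by_contra hne
    exact hbetween (e.symm ⟨e a + 1, by omega⟩) (by simp only [Equiv.apply_symm_apply]; omega)
  rw [hab, polygonSides, mem_insert, mem_image]
  exact .inr ⟨e a, mem_range.2 (by omega), by simp [spineChord, hconsec]⟩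

theorem IsBookEmbedding.card_edgeSet_le (h : IsBookEmbedding G (fun v => (e v : ℕ)) page)
    (hn : 3 ≤ n) : Nat.card G.edgeSet ≤ n + k * (n - 3) := by
  classical
  have := Fintype.ofEquiv _ e.symm
  set chord : G.edgeSet → ℕ × ℕ := fun z => spineChord (fun v => (e v : ℕ)) z
  have hinj : Function.Injective chord :=
    (spineChord_injective (Fin.val_injective.comp e.injective)).comp Subtype.val_injective
  set sides := univ.filter fun z => chord z ∈ polygonSides n
  set onPage := fun p : Fin k => univ.filter fun z => chord z ∉ polygonSides n ∧ page z = some p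
  have hsides : #sides ≤ n :=
    (card_le_card_of_injOn chord (fun z hz => (mem_filter.1 hz).2) hinj.injOn).trans
      (card_polygonSides_le (by omega))
  have honPage : ∀ p, #(onPage p) ≤ n - 3 := fun p => by
    rw [← card_image_of_injective _ hinj]
    apply card_noncrossing_diagonals_le hn
    · simp only [mem_image, mem_filter, onPage, forall_exists_index, and_imp]
      rintro _ z - hz - rfl
      exact isDiagonal_of_notMem_polygonSides (spineChord_lt_of_mem_edgeSet e z.2).1
        (spineChord_lt_of_mem_edgeSet e z.2).2 hz
    · simp only [mem_image, mem_filter, onPage, forall_exists_index, and_imp]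
      rintro _ z - - hz rfl _ z' - - hz' rfl
      exact h.not_chordsCross hz hz'
  have hcover : (univ : Finset G.edgeSet) ⊆ sides ∪ univ.biUnion onPage := fun z _ => by
    by_cases hz : chord z ∈ polygonSides n
    · simp [sides, hz]
    · obtain ⟨p, hp⟩ := Option.ne_none_iff_exists'.1
        fun hnone => hz (h.spineChord_mem_polygonSides hnone)
      simp only [mem_union, mem_biUnion]
      exact .inr ⟨p, mem_univ _, by simp [onPage, hz, hp]⟩
  calc Nat.card G.edgeSet = #(univ : Finset G.edgeSet) := by
        rw [card_univ, Nat.card_eq_fintype_card]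
    _ ≤ #sides + ∑ p, #(onPage p) := (card_le_card hcover).trans
        ((card_union_le _ _).trans (Nat.add_le_add_left card_biUnion_le _))
    _ ≤ n + ∑ _p : Fin k, (n - 3) := Nat.add_le_add hsides (sum_le_sum fun p _ => honPage p)
    _ = n + k * (n - 3) := by simp

end Counting

theorem HasBookEmbedding.card_edgeSet_le {V : Type*} [Fintype V] {G : SimpleGraph V} {k : ℕ}
    (h : HasBookEmbedding G k) (hV : 3 ≤ Fintype.card V) :
    Nat.card G.edgeSet ≤ Fintype.card V + k * (Fintype.card V - 3) := by
  obtain ⟨f, page, h⟩ := hasBookEmbedding_iff.1 h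
  obtain ⟨e, he⟩ := h.exists_equiv_fin
  exact he.card_edgeSet_le hV

theorem HasBookEmbedding.le_two_mul_of_top {n k : ℕ}
    (h : HasBookEmbedding (⊤ : SimpleGraph (Fin n)) k) (hn : 4 ≤ n) : n ≤ 2 * k := by
  have hcard := h.card_edgeSet_le (by simp only [Fintype.card_fin]; omega)
  rw [Nat.card_eq_fintype_card, ← edgeFinset_card, card_edgeFinset_top_eq_card_choose_two,
    Fintype.card_fin] at hcard
  have hchoose : 2 * n.choose 2 = n * (n - 1) := by
    rw [Nat.choose_two_right, Nat.mul_div_cancel' (Nat.even_mul_pred_self n).two_dvd]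
  obtain ⟨t, rfl⟩ : ∃ t, n = t + 4 := ⟨n - 4, by omega⟩
  by_contra! hk
  have := Nat.mul_le_mul_right (t + 1) (show 2 * k ≤ t + 3 by omega)
  rw [show t + 4 - 3 = t + 1 by omega] at hcard
  rw [show t + 4 - 1 = t + 3 by omega] at hchoose
  nlinarith

section CompleteWithPendants

variable {n : ℕ}

/-- `K_n` with a pendant edge at every vertex: `(i, false)` is the `i`-th vertex of `K_n` and
`(i, true)` the pendant vertex attached to it. -/
def completeWithPendants (n : ℕ) : SimpleGraph (Fin n × Bool) :=
  SimpleGraph.fromRel fun x y => x.1 = y.1 ∨ x.2 = false ∧ y.2 = false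

theorem completeWithPendants_adj {x y : Fin n × Bool} :
    (completeWithPendants n).Adj x y ↔ x ≠ y ∧ (x.1 = y.1 ∨ x.2 = false ∧ y.2 = false) := by
  rw [completeWithPendants, fromRel_adj]
  constructor
  · rintro ⟨hne, h | h⟩
    · exact ⟨hne, h⟩
    · exact ⟨hne, h.imp Eq.symm And.symm⟩
  · exact fun ⟨hne, h⟩ => ⟨hne, .inl h⟩

theorem snd_eq_false_of_adj_of_fst_ne {x y : Fin n × Bool} (h : (completeWithPendants n).Adj x y)
    (hne : x.1 ≠ y.1) : x.2 = false ∧ y.2 = false :=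
  (completeWithPendants_adj.1 h).2.resolve_left hne

def copyTopCompleteWithPendants (n : ℕ) :
    Copy (⊤ : SimpleGraph (Fin n)) (completeWithPendants n) :=
  ⟨⟨fun i => (i, false), fun h => completeWithPendants_adj.2
    ⟨fun h' => h.ne (congrArg Prod.fst h'), .inr ⟨rfl, rfl⟩⟩⟩,
    fun _ _ h => congrArg Prod.fst h⟩

/-- The Bernhart–Kainen page of the edge `{i, j}` of `K_n`: the edges with `i + j ≡ r (mod n)`
form a non-crossing zigzag, and the zigzags of two consecutive residues do not cross either. -/
def completePage (i j : Fin n) : Fin ((n + 1) / 2) :=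
  ⟨(i + j : ℕ) % n / 2, by have := Nat.mod_lt (i + j : ℕ) i.pos; omega⟩

theorem completePage_comm (i j : Fin n) : completePage i j = completePage j i := by
  simp [completePage, Nat.add_comm]

def pendantPage (x y : Fin n × Bool) : Option (Fin ((n + 1) / 2)) :=
  if x.1 = y.1 then none else some (completePage x.1 y.1)

theorem pendantPage_comm (x y : Fin n × Bool) : pendantPage x y = pendantPage y x := by
  simp only [pendantPage, eq_comm (a := x.1), completePage_comm x.1 y.1]

def completeWithPendantsPage (z : (completeWithPendants n).edgeSet) :
    Option (Fin ((n + 1) / 2)) :=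
  Sym2.lift ⟨pendantPage, pendantPage_comm⟩ z

theorem isBookEmbedding_completeWithPendants :
    IsBookEmbedding (completeWithPendants n) (fun x => 2 * (x.1 : ℕ) + x.2.toNat)
      completeWithPendantsPage where
  injective := by
    rintro ⟨i, _ | _⟩ ⟨j, _ | _⟩ h <;>
      simp only [Bool.toNat_false, Bool.toNat_true, Prod.mk.injEq, Fin.ext_iff, Bool.false_eq_true,
        Bool.true_eq_false, and_false, and_true] at h ⊢ <;> omega
  spine_adjacent := by
    rintro ⟨z, hz⟩ hnone
    induction z using Sym2.ind with | _ x y =>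
    have hfst : x.1 = y.1 := by
      by_contra hne
      simp [completeWithPendantsPage, pendantPage, hne] at hnone
    have hsnd : x.2 ≠ y.2 := fun h => (completeWithPendants_adj.1 hz).1 (Prod.ext hfst h)
    have hbetween (i : Fin n) (c : Fin n × Bool) :
        ¬(2 * (i : ℕ) + 0 < 2 * c.1 + c.2.toNat ∧ 2 * (c.1 : ℕ) + c.2.toNat < 2 * i + 1) := by
      have := Bool.toNat_le c.2; omega
    obtain ⟨i, _ | _⟩ := x <;> obtain ⟨j, _ | _⟩ := y <;> simp only [ne_eq, not_true] at hsnd <;>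
      simp only at hfst <;> subst hfst
    · exact ⟨(i, false), (i, true), rfl, by simp, hbetween i⟩
    · exact ⟨(i, false), (i, true), Sym2.eq_swap, by simp, hbetween i⟩
  not_edgesCross := by
    rintro z z' hsome heq ⟨a, b, c, d, hab, hcd, h₁, h₂, h₃⟩
    have hz : completeWithPendantsPage z = pendantPage a b := by
      simp [completeWithPendantsPage, hab]
    have hz' : completeWithPendantsPage z' = pendantPage c d := by
      simp [completeWithPendantsPage, hcd]
    rw [hz] at hsome heq
    rw [hz'] at heq
    have hab₁ : a.1 ≠ b.1 := fun h => by simp [pendantPage, h] at hsome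
    have hcd₁ : c.1 ≠ d.1 := fun h => by simp [pendantPage, h, hab₁] at heq
    have hadj : (completeWithPendants n).Adj a b := by simpa [hab] using z.2
    have hadj' : (completeWithPendants n).Adj c d := by simpa [hcd] using z'.2
    obtain ⟨ha, hb⟩ := snd_eq_false_of_adj_of_fst_ne hadj hab₁
    obtain ⟨hc, hd⟩ := snd_eq_false_of_adj_of_fst_ne hadj' hcd₁
    simp only [ha, hb, hc, hd, Bool.toNat_false, Nat.add_zero] at h₁ h₂ h₃
    simp only [pendantPage, hab₁, hcd₁, if_false, Option.some.injEq, completePage,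
      Fin.mk.injEq] at heq
    exact add_mod_div_two_ne_of_chordsCross (a := a.1) (b := b.1) (c := c.1) (d := d.1)
      ⟨by omega, by omega, by omega⟩ d.1.isLt heq

end CompleteWithPendants

section Star

variable {m : ℕ}

theorem exists_eq_of_mem_edgeSet_starGraph {z : Sym2 (Fin (m + 1))}
    (hz : z ∈ (starGraph (0 : Fin (m + 1))).edgeSet) : ∃ i : Fin m, z = s(0, i.succ) := by
  induction z using Sym2.ind with | _ x y =>
  obtain ⟨hne, rfl | rfl⟩ := starGraph_adj.1 hz
  · obtain ⟨i, rfl⟩ := Fin.exists_succ_eq.2 hne.symm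
    exact ⟨i, rfl⟩
  · obtain ⟨i, rfl⟩ := Fin.exists_succ_eq.2 hne
    exact ⟨i, Sym2.eq_swap⟩

def starIncidence (x : Fin m × Bool) : IncidencePair (starGraph (0 : Fin (m + 1))) :=
  ⟨(if x.2 then x.1.succ else 0, s(0, x.1.succ)),
    starGraph_adj.2 ⟨(Fin.succ_ne_zero _).symm, .inl rfl⟩, by split <;> simp⟩

theorem starIncidence_bijective : Function.Bijective (starIncidence (m := m)) := by
  refine ⟨fun x y h => ?_, fun ⟨⟨v, z⟩, hz, hv⟩ => ?_⟩
  · have h := congrArg Subtype.val h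
    obtain ⟨i, _ | _⟩ := x <;> obtain ⟨j, _ | _⟩ := y <;>
      simp_all [starIncidence, Fin.succ_ne_zero, (Fin.succ_ne_zero _).symm]
  · obtain ⟨i, rfl⟩ := exists_eq_of_mem_edgeSet_starGraph hz
    rcases Sym2.mem_iff.1 hv with rfl | rfl
    · exact ⟨(i, false), rfl⟩
    · exact ⟨(i, true), rfl⟩

theorem completeExpansion_adj_starIncidence {x y : Fin m × Bool} :
    (completeExpansion (starGraph (0 : Fin (m + 1)))).Adj (starIncidence x) (starIncidence y) ↔
      (completeWithPendants m).Adj x y := by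
  rw [completeExpansion, fromRel_adj, completeWithPendants_adj,
    starIncidence_bijective.injective.ne_iff]
  obtain ⟨i, _ | _⟩ := x <;> obtain ⟨j, _ | _⟩ := y <;>
    simp [starIncidence, Fin.succ_ne_zero, (Fin.succ_ne_zero _).symm, eq_comm]

noncomputable def starExpansionIso (m : ℕ) :
    completeWithPendants m ≃g completeExpansion (starGraph (0 : Fin (m + 1))) where
  toEquiv := Equiv.ofBijective _ starIncidence_bijective
  map_rel_iff' := completeExpansion_adj_starIncidence

end Star

theorem stmt8 (m : ℕ) (hm : 4 ≤ m) :
    pageNumber (completeExpansion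
      (SimpleGraph.fromRel (fun x _ : Fin (m + 1) => x = 0))) = (m + 1) / 2 := by
  have hupper : HasBookEmbedding (completeExpansion (starGraph (0 : Fin (m + 1)))) ((m + 1) / 2) :=
    (hasBookEmbedding_iff.2 ⟨_, _, isBookEmbedding_completeWithPendants⟩).of_copy
      (starExpansionIso m).symm.toCopy
  have hlower (k : ℕ) (h : HasBookEmbedding (completeExpansion (starGraph (0 : Fin (m + 1)))) k) :
      (m + 1) / 2 ≤ k := by
    have := (h.of_copy ((starExpansionIso m).toCopy.comp (copyTopCompleteWithPendants m))
      ).le_two_mul_of_top hm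
    omega
  exact IsLeast.csInf_eq ⟨hupper, hlower⟩
end

section
/- Let n ≥ 3 be a natural number and let C_n be the cycle graph on n vertices. Then the complete expansion graph E_c(C_n) is isomorphic to the cycle graph C_{2n} on 2n vertices; consequently pn(E_c(C_n)) = pn(C_n) = 1, where pn denotes the pagenumber. -/
open SimpleGraph

/-!
Listing the incidence pairs of `C_n` as `(0,{0,1}), (1,{0,1}), (1,{1,2}), (2,{1,2}), …`,
consecutive pairs alternately share an edge and a vertex, and no other two pairs share either
(this needs `n ≥ 3`, so that distinct `w` give distinct edges `{w, w+1}`). Hence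
`E_c(C_n) ≅ C_{2n}`, and since the pagenumber is an isomorphism invariant it remains to see
`pn(C_m) = 1` for `m ≥ 3`: one page carries the closing edge `{m-1, 0}` while all other edges
lie on the spine, and without pages every edge joins spine-consecutive vertices and is
determined by its lower endpoint, which is never the last vertex, so there would be fewer
than `m` edges.
-/

namespace Fin

theorem val_add_one_eq_ite {n : ℕ} [NeZero n] (i : Fin n) :
    (i + 1).val = if i.val + 1 = n then 0 else i.val + 1 := by
  rw [Fin.val_add, Fin.val_one']
  split_ifs with h
  · rw [Nat.add_mod_mod, h, Nat.mod_self]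
  · rw [Nat.add_mod_mod, Nat.mod_eq_of_lt (by omega)]

theorem add_one_add_one_ne_self {n : ℕ} [NeZero n] (hn : 2 < n) (w : Fin n) :
    w + 1 + 1 ≠ w := by
  rw [add_assoc, Ne, add_eq_left, Fin.ext_iff, Fin.val_add, Fin.val_one', Fin.val_zero,
    Nat.mod_eq_of_lt (by omega : 1 < n), Nat.mod_eq_of_lt hn]
  omega

end Fin

section CycleGraph

variable {n : ℕ} [NeZero n]

theorem cycleGraph_adj_iff_eq_add_one (hn : 1 < n) {u v : Fin n} :
    (cycleGraph n).Adj u v ↔ u = v + 1 ∨ v = u + 1 := by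
  have h1 : (1 : Fin n).val = 1 := by rw [Fin.val_one', Nat.mod_eq_of_lt hn]
  rw [cycleGraph_adj', ← h1, ← Fin.ext_iff, ← Fin.ext_iff, sub_eq_iff_eq_add, sub_eq_iff_eq_add,
    add_comm 1, add_comm 1]

theorem cycleGraph_adj_add_one (hn : 1 < n) (w : Fin n) : (cycleGraph n).Adj w (w + 1) :=
  (cycleGraph_adj_iff_eq_add_one hn).2 (Or.inr rfl)

theorem exists_eq_of_mem_edgeSet_cycleGraph (hn : 1 < n) {e : Sym2 (Fin n)}
    (he : e ∈ (cycleGraph n).edgeSet) : ∃ w, e = s(w, w + 1) := by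
  induction e using Sym2.ind with
  | _ u v =>
    rcases (cycleGraph_adj_iff_eq_add_one hn).1 he with h | h
    · exact ⟨v, h ▸ Sym2.eq_swap⟩
    · exact ⟨u, h ▸ rfl⟩

theorem sym2_add_one_injective (hn : 2 < n) :
    Function.Injective fun w : Fin n => s(w, w + 1) := by
  intro w w' h
  rcases Sym2.eq_iff.1 h with ⟨h, -⟩ | ⟨rfl, h⟩
  · exact h
  · exact absurd h (Fin.add_one_add_one_ne_self hn _)

end CycleGraph

section CompleteExpansionCycle

variable {n : ℕ} [NeZero n]

/-- Position `j = 2w + b` (`b ∈ {0, 1}`) of `C_{2n}` is sent to the endpoint `w + b` of the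
edge `{w, w + 1}` of `C_n`. -/
def cycleIncidence (hn : 1 < n) (j : Fin (2 * n)) : IncidencePair (cycleGraph n) :=
  let w : Fin n := ⟨j / 2, by omega⟩
  ⟨(if j.val % 2 = 0 then w else w + 1, s(w, w + 1)), cycleGraph_adj_add_one hn w,
    by split <;> simp⟩

theorem val_cycleIncidence_fst (hn : 1 < n) (j : Fin (2 * n)) :
    (cycleIncidence hn j).1.1.val =
      if j.val % 2 = 0 then j.val / 2 else if j.val / 2 + 1 = n then 0 else j.val / 2 + 1 := by
  simp only [cycleIncidence]
  split_ifs <;> simp_all [Fin.val_add_one_eq_ite]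

theorem cycleIncidence_snd_eq_iff (hn : 2 < n) (j j' : Fin (2 * n)) :
    (cycleIncidence (by omega) j).1.2 = (cycleIncidence (by omega) j').1.2 ↔
      j.val / 2 = j'.val / 2 :=
  (sym2_add_one_injective hn).eq_iff.trans Fin.ext_iff

theorem cycleIncidence_injective (hn : 2 < n) :
    Function.Injective (cycleIncidence (n := n) (by omega)) := by
  intro j j' h
  have hv := val_cycleIncidence_fst (by omega) j
  have hv' := val_cycleIncidence_fst (by omega) j'
  have hfst := congrArg (fun p : IncidencePair (cycleGraph n) => p.1.1.val) h
  have hsnd := (cycleIncidence_snd_eq_iff hn j j').1 (congrArg (fun p => p.1.2) h)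
  have := j.isLt; have := j'.isLt
  ext
  split_ifs at hv hv' <;> omega

theorem cycleIncidence_surjective (hn : 1 < n) :
    Function.Surjective (cycleIncidence hn) := by
  rintro ⟨⟨v, e⟩, he, hv⟩
  dsimp only at he hv
  obtain ⟨w, rfl⟩ := exists_eq_of_mem_edgeSet_cycleGraph hn he
  have hw := w.isLt
  have hhalf (b : ℕ) (hb : b < 2) : (⟨(2 * w.val + b) / 2, by omega⟩ : Fin n) = w := by
    ext; simp only; omega
  rcases Sym2.mem_iff.1 hv with h | h <;> subst v
  · exact ⟨⟨2 * w.val + 0, by omega⟩, by simp only [cycleIncidence, hhalf 0 (by omega)]; simp⟩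
  · exact ⟨⟨2 * w.val + 1, by omega⟩, by simp only [cycleIncidence, hhalf 1 (by omega)]; simp⟩

theorem completeExpansion_adj_cycleIncidence_iff (hn : 2 < n) (j j' : Fin (2 * n)) :
    (completeExpansion (cycleGraph n)).Adj (cycleIncidence (by omega) j)
      (cycleIncidence (by omega) j') ↔ (cycleGraph (2 * n)).Adj j j' := by
  rw [completeExpansion, fromRel_adj, (cycleIncidence_injective hn).ne_iff,
    cycleGraph_adj_iff_eq_add_one (by omega), cycleIncidence_snd_eq_iff hn,
    cycleIncidence_snd_eq_iff hn]
  simp only [Fin.ext_iff, val_cycleIncidence_fst, Fin.val_add_one_eq_ite, ne_eq]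
  have := j.isLt; have := j'.isLt
  grind

noncomputable def cycleGraphIsoCompleteExpansion (hn : 2 < n) :
    cycleGraph (2 * n) ≃g completeExpansion (cycleGraph n) where
  toEquiv := Equiv.ofBijective _ ⟨cycleIncidence_injective hn, cycleIncidence_surjective _⟩
  map_rel_iff' := completeExpansion_adj_cycleIncidence_iff hn _ _

end CompleteExpansionCycle

section BookEmbedding

variable {V W : Type*} {G : SimpleGraph V} {H : SimpleGraph W}

theorem edgesCross_irrefl (f : V → ℕ) (e : Sym2 V) : ¬ edgesCross f e e := by
  rintro ⟨a, b, c, d, rfl, hcd, h⟩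
  rcases Sym2.eq_iff.1 hcd with ⟨rfl, rfl⟩ | ⟨rfl, rfl⟩ <;> omega

theorem edgesCross.map {φ : V → W} {f : W → ℕ} {e e' : Sym2 V}
    (h : edgesCross (f ∘ φ) e e') : edgesCross f (e.map φ) (e'.map φ) := by
  obtain ⟨a, b, c, d, rfl, rfl, h⟩ := h
  exact ⟨φ a, φ b, φ c, φ d, rfl, rfl, h⟩

theorem HasBookEmbedding.of_injective_hom (φ : G →g H) (hφ : Function.Injective φ) {k : ℕ}
    (h : HasBookEmbedding H k) : HasBookEmbedding G k := by
  obtain ⟨f, page, hf, hspine, hcross⟩ := h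
  refine ⟨f ∘ φ, page ∘ φ.mapEdgeSet, hf.comp hφ, fun ⟨e, he⟩ hnone => ?_,
    fun e e' hsome heq hc => hcross _ _ hsome heq hc.map⟩
  obtain ⟨a, b, hab, hlt, hgap⟩ := hspine _ hnone
  induction e using Sym2.ind with
  | _ u v =>
    have hgap' (x y : V) (hx : φ x = a) (hy : φ y = b) :
        ∀ c, ¬((f ∘ φ) x < (f ∘ φ) c ∧ (f ∘ φ) c < (f ∘ φ) y) :=
      fun c => by simpa [hx, hy] using hgap (φ c)
    rcases Sym2.eq_iff.1 hab with ⟨hu, hv⟩ | ⟨hu, hv⟩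
    · exact ⟨u, v, rfl, by simpa [hu, hv], hgap' u v hu hv⟩
    · exact ⟨v, u, Sym2.eq_swap, by simpa [hu, hv], hgap' v u hv hu⟩

theorem pageNumber_congr (φ : G ≃g H) : pageNumber G = pageNumber H :=
  congrArg sInf <| Set.ext fun _ =>
    ⟨.of_injective_hom φ.symm.toHom φ.symm.injective,
      .of_injective_hom φ.toHom φ.injective⟩

theorem pageNumber_eq_one (h₁ : HasBookEmbedding G 1) (h₀ : ¬ HasBookEmbedding G 0) :
    pageNumber G = 1 :=
  le_antisymm (Nat.sInf_le h₁) <| Nat.one_le_iff_ne_zero.2 fun h =>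
    h₀ <| h ▸ Nat.sInf_mem (s := {k | HasBookEmbedding G k}) ⟨1, h₁⟩

theorem HasBookEmbedding.card_edgeSet_lt [Finite V] [Nonempty V] (h : HasBookEmbedding G 0) :
    Nat.card G.edgeSet < Nat.card V := by
  obtain ⟨f, page, hf, hspine, -⟩ := h
  choose a b hab hlt hgap using fun e => hspine e (Subsingleton.elim _ _)
  obtain ⟨top, htop⟩ := Finite.exists_max f
  have hsucc (e e' : G.edgeSet) (h : a e = a e') : f (b e) ≤ f (b e') :=
    not_lt.1 fun hlt' => hgap e (b e') ⟨h ▸ hlt e', hlt'⟩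
  have ha : Function.Injective a := fun e e' h => Subtype.ext <| by
    rw [hab e, hab e', h, hf ((hsucc e e' h).antisymm (hsucc e' e h.symm))]
  have hne (e : G.edgeSet) : a e ≠ top := fun h => (htop (b e)).not_gt (h ▸ hlt e)
  calc Nat.card G.edgeSet ≤ Nat.card {v // v ≠ top} :=
        Nat.card_le_card_of_injective (fun e => ⟨a e, hne e⟩)
          fun e e' h => ha (congrArg Subtype.val h)
    _ < Nat.card V := Finite.card_subtype_lt (not_not.2 rfl)

end BookEmbedding

section PageNumberCycleGraph

variable {n : ℕ} [NeZero n]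

theorem hasBookEmbedding_cycleGraph_one (hn : 1 < n) : HasBookEmbedding (cycleGraph n) 1 := by
  classical
  refine ⟨Fin.val, fun e => if (e : Sym2 (Fin n)) = s(-1, 0) then some 0 else none,
    Fin.val_injective, fun ⟨e, he⟩ hnone => ?_, fun e e' hsome heq => ?_⟩
  · obtain ⟨w, rfl⟩ := exists_eq_of_mem_edgeSet_cycleGraph hn he
    have hw_ne : s(w, w + 1) ≠ s(-1, 0) := fun h => by simp [h] at hnone
    have hw : (w + 1).val = w.val + 1 := by
      rw [Fin.val_add_one_eq_ite, if_neg]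
      intro hwn
      have hw0 : w + 1 = 0 := Fin.ext (by rw [Fin.val_add_one_eq_ite, if_pos hwn]; rfl)
      exact hw_ne (by rw [hw0, eq_neg_of_add_eq_zero_left hw0])
    exact ⟨w, w + 1, rfl, by omega, fun c => by omega⟩
  · simp only at hsome heq
    have hedge (e : (cycleGraph n).edgeSet)
        (h : (if (e : Sym2 (Fin n)) = s(-1, 0) then some (0 : Fin 1) else none).isSome) :
        (e : Sym2 (Fin n)) = s(-1, 0) := by
      by_contra h'
      simp [h'] at h
    rw [hedge e hsome, hedge e' (heq ▸ hsome)]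
    exact edgesCross_irrefl _ _

theorem not_hasBookEmbedding_cycleGraph_zero (hn : 2 < n) :
    ¬ HasBookEmbedding (cycleGraph n) 0 := fun h => by
  have hle : Nat.card (Fin n) ≤ Nat.card (cycleGraph n).edgeSet := Nat.card_le_card_of_injective
    (fun w : Fin n => (⟨s(w, w + 1), cycleGraph_adj_add_one (by omega) w⟩ :
      (cycleGraph n).edgeSet))
    fun w w' h => sym2_add_one_injective hn (congrArg Subtype.val h)
  have hlt := h.card_edgeSet_lt
  rw [Nat.card_fin] at hle hlt
  omega

theorem pageNumber_cycleGraph (hn : 2 < n) : pageNumber (cycleGraph n) = 1 :=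
  pageNumber_eq_one (hasBookEmbedding_cycleGraph_one (by omega))
    (not_hasBookEmbedding_cycleGraph_zero hn)

end PageNumberCycleGraph

theorem stmt16 (n : ℕ) (hn : 3 ≤ n) :
    Nonempty (completeExpansion (cycleGraph n) ≃g cycleGraph (2 * n)) ∧
    pageNumber (completeExpansion (cycleGraph n)) = 1 ∧
    pageNumber (cycleGraph n) = 1 := by
  have : NeZero n := ⟨by omega⟩
  have φ := cycleGraphIsoCompleteExpansion hn
  refine ⟨⟨φ.symm⟩, ?_, pageNumber_cycleGraph hn⟩
  rw [← pageNumber_congr φ]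
  exact pageNumber_cycleGraph (by omega)
end
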